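/- For every line ℓ in ℙ(Sym³ℂ²), ℓ meets the secant locus of the twisted cubic curve; i.e., every 2-dimensional subspace of the space of binary cubics contains a nonzero cubic which is not of the form v₁v₂² with v₁, v₂ linearly independent linear forms. -/

import Mathlib

namespace Stmt19Aux
open Polynomial

lemma expand_form (p q u s : ℂ) :
    (C p * X + C q) * (C u * X + C s) ^ 2 =
      C (p*u*u) * X^3 + C (p*u*s + p*u*s + q*u*u) * X^2
        + C (p*s*s + (q*u*s + q*u*s)) * X + C (q*s*s) := by
  simp only [C_add, C_mul]; ring

lemma cubic_coeff (a b c d : ℂ) :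
    (C a * X^3 + C b * X^2 + C c * X + C d).coeff 3 = a ∧
    (C a * X^3 + C b * X^2 + C c * X + C d).coeff 2 = b ∧
    (C a * X^3 + C b * X^2 + C c * X + C d).coeff 1 = c ∧
    (C a * X^3 + C b * X^2 + C c * X + C d).coeff 0 = d := by
  refine ⟨?_, ?_, ?_, ?_⟩ <;>
    simp [coeff_add, coeff_C_mul, coeff_X_pow, coeff_X, coeff_C]

lemma lin_ne {p q : ℂ} (h : ¬(p = 0 ∧ q = 0)) : C p * X + C q ≠ 0 := by
  intro h0
  apply h
  constructor
  · have := congrArg (fun P => Polynomial.coeff P 1) h0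
    simpa [coeff_add, coeff_C_mul, coeff_X, coeff_C] using this
  · have := congrArg (fun P => Polynomial.coeff P 0) h0
    simpa [coeff_add, coeff_C_mul, coeff_X, coeff_C] using this

lemma prod_ne {p q u s : ℂ} (h : p * s - q * u ≠ 0) :
    (C p * X + C q) * (C u * X + C s) ^ 2 ≠ 0 := by
  refine mul_ne_zero (lin_ne ?_) (pow_ne_zero _ (lin_ne ?_))
  · rintro ⟨rfl, rfl⟩; simp at h
  · rintro ⟨rfl, rfl⟩; simp at h

lemma sq_dvd_eval {P Q : ℂ[X]} {r : ℂ} (h : P = (X - C r) ^ 2 * Q) :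
    P.eval r = 0 ∧ (derivative P).eval r = 0 := by
  constructor
  · rw [h]; simp
  · rw [h, derivative_mul, derivative_pow]
    simp

lemma cube_case {r p q u s : ℂ}
    (h : (X - C r) ^ 3 = (C p * X + C q) * (C u * X + C s) ^ 2)
    (hps : p * s - q * u ≠ 0) : False := by
  have hu : u ≠ 0 := by
    intro hu0
    subst hu0
    have h3 : ((X - C r : ℂ[X]) ^ 3).coeff 3 = 1 := by
      have : ((X - C r : ℂ[X]) ^ 3) = C 1 * X^3 + C (-(r+r+r)) * X^2
          + C (r*r + (r*r + r*r)) * X + C (-(r*r*r)) := by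
        simp only [C_add, C_mul, C_neg, map_one]; ring
      rw [this]; exact (cubic_coeff _ _ _ _).1
    rw [h, expand_form] at h3
    rw [(cubic_coeff _ _ _ _).1] at h3
    simp at h3
  -- evaluate at -s/u
  have hroot : (-s/u - r) ^ 3 = 0 := by
    have := congrArg (fun P => Polynomial.eval (-s/u) P) h
    simp only [eval_pow, eval_sub, eval_X, eval_C, eval_mul, eval_add] at this
    rw [this]
    have h0 : u * (-s/u) + s = 0 := by field_simp; ring
    rw [h0]
    ring
  have hr : -s/u = r := sub_eq_zero.mp (pow_eq_zero_iff (n := 3) (by norm_num) |>.mp hroot)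
  have hs : s = -(u * r) := by
    field_simp at hr
    linear_combination -hr
  have hlin : C u * X + C s = C u * (X - C r) := by
    rw [hs]
    simp only [C_neg, C_mul]
    ring
  have key : (X - C r)^2 * (X - C r) = (X - C r)^2 * ((C p * X + C q) * C (u*u)) := by
    calc (X - C r)^2 * (X - C r) = (X - C r)^3 := by ring
    _ = (C p * X + C q) * (C u * (X - C r))^2 := by rw [h, hlin]
    _ = (X - C r)^2 * ((C p * X + C q) * C (u*u)) := by simp only [C_mul]; ring
  have hcan : (X - C r : ℂ[X]) = (C p * X + C q) * C (u*u) :=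
    mul_left_cancel₀ (pow_ne_zero 2 (X_sub_C_ne_zero r)) key
  have hcan2 : (X - C r : ℂ[X]) = C (p*(u*u)) * X + C (q*(u*u)) := by
    rw [hcan]; simp only [C_mul]; ring
  have h1 : (1 : ℂ) = p * (u*u) := by
    have := congrArg (fun P => Polynomial.coeff P 1) hcan2
    simpa [coeff_sub, coeff_X, coeff_C, coeff_add, coeff_C_mul] using this
  have h0 : -r = q * (u*u) := by
    have := congrArg (fun P => Polynomial.coeff P 0) hcan2
    simpa [coeff_sub, coeff_X, coeff_C, coeff_add, coeff_C_mul] using this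
  apply hps
  have hq : q = -(p * r) := by linear_combination q * h1 - p * h0
  rw [hs, hq]
  ring

lemma coeff_degenerate {p q u s : ℂ} (hps : p * s - q * u ≠ 0)
    (h3 : p * u * u = 0) (h2 : p * u * s + p * u * s + q * u * u = 0) :
    u = 0 ∧ p ≠ 0 ∧ s ≠ 0 := by
  by_cases hu : u = 0
  · subst hu
    simp only [mul_zero, zero_mul, sub_zero] at hps
    exact ⟨rfl, left_ne_zero_of_mul hps, right_ne_zero_of_mul hps⟩
  · exfalso
    have hp : p = 0 := by
      rcases mul_eq_zero.mp h3 with h | h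
      · rcases mul_eq_zero.mp h with h' | h'
        · exact h'
        · exact absurd h' hu
      · exact absurd h hu
    subst hp
    have hq : q = 0 := by
      simp only [zero_mul, zero_add] at h2
      rcases mul_eq_zero.mp h2 with h | h
      · rcases mul_eq_zero.mp h with h' | h'
        · exact h'
        · exact absurd h' hu
      · exact absurd h hu
    subst hq
    simp at hps

lemma natDegree_form_le (p q u s : ℂ) :
    ((C p * X + C q) * (C u * X + C s) ^ 2).natDegree ≤ 3 := by
  refine le_trans (natDegree_mul_le) ?_
  have h1 : (C p * X + C q : ℂ[X]).natDegree ≤ 1 := by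
    refine le_trans (natDegree_add_le _ _) ?_
    simp [natDegree_C_mul_le, natDegree_C]
    exact le_trans (natDegree_C_mul_le _ _) (by simp)
  have h2 : ((C u * X + C s : ℂ[X]) ^ 2).natDegree ≤ 2 := by
    refine le_trans (natDegree_pow_le) ?_
    have : (C u * X + C s : ℂ[X]).natDegree ≤ 1 := by
      refine le_trans (natDegree_add_le _ _) ?_
      simp [natDegree_C]
      exact le_trans (natDegree_C_mul_le _ _) (by simp)
    omega
  omega

lemma wronskian_ne {F G : ℂ[X]} (hFne : F ≠ 0) (hGne : G ≠ 0)
    (hind : ∀ a c : ℂ, ¬(a = 0 ∧ c = 0) → C a * F + C c * G ≠ 0)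
    (h : F * derivative G = derivative F * G) : False := by
  set d := GCDMonoid.gcd F G with hd_def
  have hd : d ≠ 0 := fun h0 => hFne ((gcd_eq_zero_iff F G).mp h0).1
  set F₁ := F / d with hF₁def
  set G₁ := G / d with hG₁def
  have hcop : IsCoprime F₁ G₁ := isCoprime_div_gcd_div_gcd hGne
  have hF : d * F₁ = F := EuclideanDomain.mul_div_cancel' hd (gcd_dvd_left F G)
  have hG : d * G₁ = G := EuclideanDomain.mul_div_cancel' hd (gcd_dvd_right F G)
  have hF₁ne : F₁ ≠ 0 := by intro h0; rw [h0, mul_zero] at hF; exact hFne hF.symm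
  have hG₁ne : G₁ ≠ 0 := by intro h0; rw [h0, mul_zero] at hG; exact hGne hG.symm
  have key : F₁ * derivative G₁ = derivative F₁ * G₁ := by
    rw [← hF, ← hG, derivative_mul, derivative_mul] at h
    apply mul_left_cancel₀ (mul_ne_zero hd hd)
    linear_combination h
  have hdF : F₁ ∣ derivative F₁ :=
    hcop.dvd_of_dvd_mul_right ⟨derivative G₁, key.symm⟩
  have hdG : G₁ ∣ derivative G₁ := by
    refine hcop.symm.dvd_of_dvd_mul_right ⟨derivative F₁, ?_⟩
    linear_combination key
  have degF₁ : F₁.natDegree = 0 := by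
    by_cases hd0 : derivative F₁ = 0
    · exact natDegree_eq_zero_of_derivative_eq_zero hd0
    · by_contra hne0
      have h1 := Polynomial.natDegree_le_of_dvd hdF hd0
      have h2 := Polynomial.natDegree_derivative_lt hne0
      omega
  have degG₁ : G₁.natDegree = 0 := by
    by_cases hd0 : derivative G₁ = 0
    · exact natDegree_eq_zero_of_derivative_eq_zero hd0
    · by_contra hne0
      have h1 := Polynomial.natDegree_le_of_dvd hdG hd0
      have h2 := Polynomial.natDegree_derivative_lt hne0
      omega
  obtain ⟨c₁, hc₁⟩ : ∃ c, F₁ = C c := ⟨_, Polynomial.eq_C_of_natDegree_eq_zero degF₁⟩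
  obtain ⟨c₂, hc₂⟩ : ∃ c, G₁ = C c := ⟨_, Polynomial.eq_C_of_natDegree_eq_zero degG₁⟩
  have hc₁ne : c₁ ≠ 0 := by
    intro h0; rw [h0, map_zero] at hc₁; exact hF₁ne hc₁
  apply hind c₂ (-c₁) (by rintro ⟨-, h2⟩; simp at h2; exact hc₁ne h2)
  rw [← hF, ← hG, hc₁, hc₂]
  simp only [map_neg]
  ring

lemma univ_main (F G : ℂ[X])
    (Hyp : ∀ a c : ℂ, ¬(a = 0 ∧ c = 0) → ∃ p q u s : ℂ, p * s - q * u ≠ 0 ∧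
      C a * F + C c * G = (C p * X + C q) * (C u * X + C s) ^ 2) : False := by
  have hne : ∀ a c : ℂ, ¬(a = 0 ∧ c = 0) → C a * F + C c * G ≠ 0 := by
    intro a c h
    obtain ⟨p, q, u, s, hps, heq⟩ := Hyp a c h
    rw [heq]; exact prod_ne hps
  have hFne : F ≠ 0 := by
    have := hne 1 0 (by simp); simpa using this
  have hGne : G ≠ 0 := by
    have := hne 0 1 (by simp); simpa using this
  have hF3 : F.natDegree ≤ 3 := by
    obtain ⟨p, q, u, s, hps, heq⟩ := Hyp 1 0 (by simp)
    have : F = (C p * X + C q) * (C u * X + C s) ^ 2 := by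
      rw [← heq]; simp
    rw [this]; exact natDegree_form_le p q u s
  have hcoeff : ∀ (a c : ℂ) (k : ℕ),
      (C a * F + C c * G).coeff k = a * F.coeff k + c * G.coeff k := by
    intro a c k; simp [coeff_add, coeff_C_mul]
  by_cases hdeg : (F.coeff 3 = 0 ∧ F.coeff 2 = 0) ∧ (G.coeff 3 = 0 ∧ G.coeff 2 = 0)
  · -- degenerate case : both F and G have degree ≤ 1
    have key : ∀ a c : ℂ, ¬(a = 0 ∧ c = 0) → a * F.coeff 3 + c * G.coeff 3 = 0 →
        a * F.coeff 2 + c * G.coeff 2 = 0 → a * F.coeff 1 + c * G.coeff 1 ≠ 0 := by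
      intro a c hac h3 h2
      obtain ⟨p, q, u, s, hps, heq⟩ := Hyp a c hac
      have e3 : a * F.coeff 3 + c * G.coeff 3 = p * u * u := by
        rw [← hcoeff, heq, expand_form]; exact (cubic_coeff _ _ _ _).1
      have e2 : a * F.coeff 2 + c * G.coeff 2 = p * u * s + p * u * s + q * u * u := by
        rw [← hcoeff, heq, expand_form]; exact (cubic_coeff _ _ _ _).2.1
      have e1 : a * F.coeff 1 + c * G.coeff 1 = p * s * s + (q * u * s + q * u * s) := by
        rw [← hcoeff, heq, expand_form]; exact (cubic_coeff _ _ _ _).2.2.1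
      obtain ⟨hu, hp, hs⟩ := coeff_degenerate hps (by rw [← e3, h3]) (by rw [← e2, h2])
      rw [e1, hu]
      simpa using mul_ne_zero (mul_ne_zero hp hs) hs
    have hF1 : F.coeff 1 ≠ 0 := by
      have := key 1 0 (by simp) (by simp [hdeg.1.1]) (by simp [hdeg.1.2])
      simpa using this
    have hG1 : G.coeff 1 ≠ 0 := by
      have := key 0 1 (by simp) (by simp [hdeg.2.1]) (by simp [hdeg.2.2])
      simpa using this
    set t : ℂ := -(F.coeff 1) / (G.coeff 1) with ht_def
    have := key 1 t (by simp) (by simp [hdeg.1.1, hdeg.2.1])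
      (by simp [hdeg.1.2, hdeg.2.2])
    apply this
    rw [ht_def]
    field_simp
    ring
  · -- main case
    set E : Set ℂ := {t | F.coeff 3 + t * G.coeff 3 = 0 ∧ F.coeff 2 + t * G.coeff 2 = 0}
      with hE_def
    have hEfin : E.Finite := by
      apply Set.Subsingleton.finite
      intro t₁ h₁ t₂ h₂
      by_contra hne12
      have e₁ : F.coeff 3 + t₁ * G.coeff 3 = 0 ∧ F.coeff 2 + t₁ * G.coeff 2 = 0 := h₁
      have e₂ : F.coeff 3 + t₂ * G.coeff 3 = 0 ∧ F.coeff 2 + t₂ * G.coeff 2 = 0 := h₂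
      have hG3 : G.coeff 3 = 0 := by
        have h := mul_eq_zero.mp (show (t₁ - t₂) * G.coeff 3 = 0 by
          linear_combination e₁.1 - e₂.1)
        exact h.resolve_left (sub_ne_zero.mpr hne12)
      have hG2 : G.coeff 2 = 0 := by
        have h := mul_eq_zero.mp (show (t₁ - t₂) * G.coeff 2 = 0 by
          linear_combination e₁.2 - e₂.2)
        exact h.resolve_left (sub_ne_zero.mpr hne12)
      exact hdeg ⟨⟨by linear_combination e₁.1 - t₁ * hG3, by linear_combination e₁.2 - t₁ * hG2⟩, hG3, hG2⟩
    set Hw : ℂ[X] := F * derivative G - derivative F * G with hHw_def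
    have claim : ∀ t ∉ E, ∃ r : ℂ,
        ((X - C r) ^ 2 ∣ (C 1 * F + C t * G)) ∧ Hw.eval r = 0 := by
      intro t ht
      obtain ⟨p, q, u, s, hps, heq⟩ := Hyp 1 t (by simp)
      have hu : u ≠ 0 := by
        intro hu0
        apply ht
        subst hu0
        constructor
        · have e3 : (1:ℂ) * F.coeff 3 + t * G.coeff 3 = p * 0 * 0 := by
            rw [← hcoeff, heq, expand_form]; exact (cubic_coeff _ _ _ _).1
          simpa using e3
        · have e2 : (1:ℂ) * F.coeff 2 + t * G.coeff 2 = p * 0 * s + p * 0 * s + q * 0 * 0 := by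
            rw [← hcoeff, heq, expand_form]; exact (cubic_coeff _ _ _ _).2.1
          simpa using e2
      have hlin : C u * X + C s = C u * (X - C (-s/u)) := by
        rw [mul_sub, ← C_mul]
        have huu : u * (-s / u) = -s := by
          rw [mul_comm]; exact div_mul_cancel₀ _ hu
        rw [huu, C_neg]
        ring
      have hPfac : C 1 * F + C t * G
          = (X - C (-s/u)) ^ 2 * ((C p * X + C q) * C u ^ 2) := by
        rw [heq, hlin]; ring
      refine ⟨-s / u, ⟨_, hPfac⟩, ?_⟩
      obtain ⟨h0, h1⟩ := sq_dvd_eval hPfac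
      have hHP : Hw = (C 1 * F + C t * G) * derivative G
          - derivative (C 1 * F + C t * G) * G := by
        rw [hHw_def]
        simp only [derivative_add, derivative_C_mul, C_1, one_mul]
        ring
      rw [hHP, eval_sub, eval_mul, eval_mul, h0, h1]
      ring
    by_cases hH : Hw = 0
    · refine wronskian_ne hFne hGne hne (sub_eq_zero.mp ?_)
      rw [← hHw_def, hH]
    · -- pigeonhole
      set ρ : ℂ → ℂ := fun t => if ht : t ∈ E then 0 else (claim t ht).choose with hρ_def
      have hmapsto : Set.MapsTo ρ Eᶜ ↑(Hw.roots.toFinset) := by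
        intro t ht
        have ht' : t ∉ E := ht
        simp only [hρ_def, dif_neg ht']
        have hspec := (claim t ht').choose_spec
        simp only [Finset.coe_sort_coe, Finset.mem_coe, Multiset.mem_toFinset]
        exact (Polynomial.mem_roots hH).mpr hspec.2
      have hinf : (Eᶜ : Set ℂ).Infinite := hEfin.infinite_compl
      obtain ⟨t₁, ht₁, t₂, ht₂, hne12, heqr⟩ :=
        hinf.exists_ne_map_eq_of_mapsTo hmapsto (Hw.roots.toFinset.finite_toSet)
      have ht₁' : t₁ ∉ E := ht₁
      have ht₂' : t₂ ∉ E := ht₂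
      set r := (claim t₁ ht₁').choose with hr_def
      have d₁ : (X - C r) ^ 2 ∣ (C 1 * F + C t₁ * G) := (claim t₁ ht₁').choose_spec.1
      have hr2 : (claim t₂ ht₂').choose = r := by
        have := heqr
        simp only [hρ_def, dif_neg ht₁', dif_neg ht₂'] at this
        exact this.symm
      have d₂ : (X - C r) ^ 2 ∣ (C 1 * F + C t₂ * G) := by
        rw [← hr2]; exact (claim t₂ ht₂').choose_spec.1
      have dG : (X - C r) ^ 2 ∣ G := by
        have hsub : (X - C r) ^ 2 ∣ C (t₁ - t₂) * G := by
          have h := dvd_sub d₁ d₂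
          have : (C 1 * F + C t₁ * G) - (C 1 * F + C t₂ * G) = C (t₁ - t₂) * G := by
            rw [C_sub]; ring
          rwa [this] at h
        have h2 : G = C (t₁ - t₂)⁻¹ * (C (t₁ - t₂) * G) := by
          rw [← mul_assoc, ← C_mul, inv_mul_cancel₀ (sub_ne_zero.mpr hne12), C_1, one_mul]
        rw [h2]
        exact hsub.mul_left _
      have dF : (X - C r) ^ 2 ∣ F := by
        have h := dvd_sub d₁ (dG.mul_left (C t₁))
        have : (C 1 * F + C t₁ * G) - C t₁ * G = F := by rw [C_1]; ring
        rwa [this] at h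
      obtain ⟨A, hA⟩ := dF
      obtain ⟨B, hB⟩ := dG
      have hAne : A ≠ 0 := by rintro rfl; rw [mul_zero] at hA; exact hFne hA
      have hBne : B ≠ 0 := by rintro rfl; rw [mul_zero] at hB; exact hGne hB
      have hXr : ((X : ℂ[X]) - C r) ^ 2 ≠ 0 := pow_ne_zero 2 (X_sub_C_ne_zero r)
      have hA1 : A.natDegree ≤ 1 := by
        have hdm := natDegree_mul hXr hAne
        rw [← hA] at hdm
        have : (((X : ℂ[X]) - C r) ^ 2).natDegree = 2 := by
          rw [natDegree_pow, natDegree_X_sub_C]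
        omega
      have hB1 : B.natDegree ≤ 1 := by
        have hdm := natDegree_mul hXr hBne
        rw [← hB] at hdm
        have h2 : (((X : ℂ[X]) - C r) ^ 2).natDegree = 2 := by
          rw [natDegree_pow, natDegree_X_sub_C]
        have hG3 : G.natDegree ≤ 3 := by
          obtain ⟨p, q, u, s, hps, heq⟩ := Hyp 0 1 (by simp)
          have : G = (C p * X + C q) * (C u * X + C s) ^ 2 := by
            rw [← heq]; simp
          rw [this]; exact natDegree_form_le p q u s
        omega
      set a₁ := A.coeff 1 with ha₁
      set a₀ := A.coeff 0 with ha₀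
      set b₁ := B.coeff 1 with hb₁
      set b₀ := B.coeff 0 with hb₀
      have hAeq : A = C a₁ * X + C a₀ := eq_X_add_C_of_natDegree_le_one hA1
      have hBeq : B = C b₁ * X + C b₀ := eq_X_add_C_of_natDegree_le_one hB1
      have hdet : a₁ * b₀ - a₀ * b₁ ≠ 0 := by
        intro hdet0
        by_cases hcc : a₁ = 0 ∧ b₁ = 0
        · have ha₀ne : a₀ ≠ 0 := by
            intro h0
            apply hAne
            rw [hAeq, hcc.1, h0]; simp
          apply hne b₀ (-a₀) (by rintro ⟨-, h2⟩; rw [neg_eq_zero] at h2; exact ha₀ne h2)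
          rw [hA, hB, hAeq, hBeq, hcc.1, hcc.2]
          simp only [map_neg, C_0]
          ring
        · apply hne b₁ (-a₁) (by
            rintro ⟨h1, h2⟩
            rw [neg_eq_zero] at h2
            exact hcc ⟨h2, h1⟩)
          rw [hA, hB, hAeq, hBeq]
          have hC : C b₁ * C a₀ - C a₁ * C b₀ = 0 := by
            rw [← C_mul, ← C_mul, ← C_sub,
              show b₁ * a₀ - a₁ * b₀ = 0 by linear_combination -hdet0, C_0]
          simp only [map_neg]
          linear_combination ((X - C r : ℂ[X]) ^ 2) * hC
      set α : ℂ := (b₀ + r * b₁) / (a₁ * b₀ - a₀ * b₁) with hα_def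
      set β : ℂ := -(a₀ + r * a₁) / (a₁ * b₀ - a₀ * b₁) with hβ_def
      have hs1 : α * a₁ + β * b₁ = 1 := by
        rw [hα_def, hβ_def, div_mul_eq_mul_div, div_mul_eq_mul_div, ← add_div, div_eq_iff hdet]; ring
      have hs0 : α * a₀ + β * b₀ = -r := by
        rw [hα_def, hβ_def, div_mul_eq_mul_div, div_mul_eq_mul_div, ← add_div, div_eq_iff hdet]; ring
      have hs1' : C α * C a₁ + C β * C b₁ = 1 := by
        rw [← C_mul, ← C_mul, ← C_add, hs1, C_1]
      have hs0' : C α * C a₀ + C β * C b₀ = -(C r) := by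
        rw [← C_mul, ← C_mul, ← C_add, hs0, C_neg]
      have hcube : C α * F + C β * G = (X - C r) ^ 3 := by
        rw [hA, hB, hAeq, hBeq]
        linear_combination ((X - C r : ℂ[X]) ^ 2 * X) * hs1'
          + ((X - C r : ℂ[X]) ^ 2) * hs0'
      have hαβ : ¬(α = 0 ∧ β = 0) := by
        rintro ⟨h1, h2⟩
        rw [h1, h2] at hcube
        simp only [C_0, zero_mul, add_zero, zero_add] at hcube
        exact pow_ne_zero 3 (X_sub_C_ne_zero r) hcube.symm
      obtain ⟨p, q, u, s, hps, heq⟩ := Hyp α β hαβ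
      exact cube_case (by rw [← hcube, heq]) hps

end Stmt19Aux



open MvPolynomial

/-- Every line in `ℙ(Sym³ℂ²)` meets the secant locus of the twisted cubic: every
`2`-dimensional subspace of binary cubics contains a nonzero cubic which is *not* of
the form `v₁v₂²` with `v₁, v₂` linearly independent linear forms. -/
theorem stmt19 (W : Submodule ℂ (MvPolynomial (Fin 2) ℂ))
    (hW : W ≤ homogeneousSubmodule (Fin 2) ℂ 3)
    (hdim : Module.finrank ℂ W = 2) :
    ∃ f ∈ W, f ≠ 0 ∧
      ¬∃ p q u s : ℂ, p * s - q * u ≠ 0 ∧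
        f = (C p * X 0 + C q * X 1) * (C u * X 0 + C s * X 1) ^ 2 := by
  by_contra hcon
  push_neg at hcon
  haveI : Module.Free ℂ ↥W := Module.Free.of_divisionRing ℂ ↥W
  haveI : Module.Finite ℂ W := Module.finite_of_finrank_eq_succ (n := 1) (by rw [hdim])
  let b : Module.Basis (Fin 2) ℂ W := Module.finBasisOfFinrankEq ℂ W hdim
  set ψ : MvPolynomial (Fin 2) ℂ →ₐ[ℂ] Polynomial ℂ :=
    MvPolynomial.aeval ![Polynomial.X, 1] with hψ
  have hind : ∀ a c : ℂ, ¬(a = 0 ∧ c = 0) →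
      a • (b 0 : MvPolynomial (Fin 2) ℂ) + c • (b 1 : MvPolynomial (Fin 2) ℂ) ≠ 0 := by
    intro a c hac h0
    have h0' : a • b 0 + c • b 1 = (0 : W) := by
      apply Subtype.ext
      push_cast
      exact h0
    have hsum : ∑ i : Fin 2, (![a, c] i) • b i = 0 := by
      rw [Fin.sum_univ_two]
      simpa using h0'
    have hz := Fintype.linearIndependent_iff.mp b.linearIndependent ![a, c] hsum
    exact hac ⟨by simpa using hz 0, by simpa using hz 1⟩
  apply Stmt19Aux.univ_main (ψ (b 0 : MvPolynomial (Fin 2) ℂ)) (ψ (b 1 : MvPolynomial (Fin 2) ℂ))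
  intro a c hac
  have hmem : a • (b 0 : MvPolynomial (Fin 2) ℂ) + c • (b 1 : MvPolynomial (Fin 2) ℂ) ∈ W :=
    W.add_mem (W.smul_mem _ (b 0).2) (W.smul_mem _ (b 1).2)
  obtain ⟨p, q, u, s, hps, heq⟩ := hcon _ hmem (hind a c hac)
  refine ⟨p, q, u, s, hps, ?_⟩
  have hψeq := congrArg ψ heq
  simp only [map_add, map_smul, map_mul, map_pow, hψ, MvPolynomial.aeval_X,
    MvPolynomial.aeval_C, Matrix.cons_val_zero, Matrix.cons_val_one, Matrix.head_cons,
    Polynomial.algebraMap_eq, mul_one] at hψeq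
  rw [Polynomial.smul_eq_C_mul, Polynomial.smul_eq_C_mul] at hψeq
  exact hψeq
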